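/- arXiv:2304.05275 — 2 statements merged into one kernel-verified Lean document; each statement's English description precedes it below -/
import Mathlib

section
/- Let G be a connected graph of order n and S ⊆ V(G), with λ₁ ≥ ⋯ ≥ λ_n the eigenvalues of G_S. If the eigenvalues of G_{V(G)∖S} are exactly 1−λ_n ≥ ⋯ ≥ 1−λ₁, then G is bipartite. (Together with the converse, this characterizes bipartiteness.) -/
/-!
Write `M` for the adjacency matrix of `G` and `L` for the loop matrix of `V ∖ S`, so that
`G_{V∖S} = M + L` and `I − G_S = L − M`. The spectral hypothesis gives
`tr (M + L)^k = tr (L − M)^k` for every `k`, which for odd `k` reads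
`tr ((M + L)^k + (M − L)^k) = 0`. As `M` and `L` are entrywise nonnegative, the matrix
`(M + L)^k + (M − L)^k` (twice the sum of the words with an even number of `L`s) dominates
`2 M^k` entrywise, and `tr M^k > 0` whenever `G` has a closed walk of length `k`.
So every closed walk of `G` has even length.
-/

open Matrix Finset

/-- The diagonal 0-1 matrix indicating the loop vertices in `S`. -/
def loopMat (n : ℕ) (S : Finset (Fin n)) : Matrix (Fin n) (Fin n) ℝ :=
  Matrix.of fun i j => if i = j ∧ i ∈ S then 1 else 0

open Polynomial in
theorem Matrix.IsHermitian.trace_aeval {𝕜 ι : Type*} [RCLike 𝕜] [Fintype ι] [DecidableEq ι]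
    {A : Matrix ι ι 𝕜} (hA : A.IsHermitian) (p : 𝕜[X]) :
    (aeval A p).trace = ∑ i, p.eval (hA.eigenvalues i : 𝕜) := by
  conv_lhs => rw [hA.spectral_theorem]
  rw [aeval_algHom_apply, Unitary.conjStarAlgAut_apply, trace_mul_cycle, Unitary.coe_star_mul_self,
    one_mul, ← diagonalAlgHom_apply (R := 𝕜), aeval_algHom_apply, diagonalAlgHom_apply,
    trace_diagonal, aeval_pi_apply]
  simp

open Polynomial in
theorem Matrix.IsHermitian.trace_pow_eq_trace_one_sub_pow {ι : Type*} [Fintype ι]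
    [DecidableEq ι] {A B : Matrix ι ι ℝ} (hA : A.IsHermitian) (hB : B.IsHermitian)
    (hspec : univ.val.map hB.eigenvalues = (univ.val.map hA.eigenvalues).map (fun x => 1 - x))
    (k : ℕ) : (B ^ k).trace = ((1 - A) ^ k).trace := by
  calc (B ^ k).trace = ∑ i, hB.eigenvalues i ^ k := by
        simpa using hB.trace_aeval (X ^ k)
    _ = ∑ i, (1 - hA.eigenvalues i) ^ k := by
        simpa only [Multiset.map_map, Function.comp_apply, sum_map_val] using
          congrArg (fun m => (m.map (· ^ k)).sum) hspec
    _ = ((1 - A) ^ k).trace := by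
        have h := hA.trace_aeval ((1 - X) ^ k)
        simp only [map_pow, aeval_sub, map_one, aeval_X, eval_pow, eval_sub, eval_one,
          eval_X] at h
        exact h.symm

section Nonneg

variable (ι R : Type*) [Fintype ι] [DecidableEq ι] [Semiring R] [PartialOrder R]
  [IsOrderedRing R]

def Matrix.nonnegSubsemiring : Subsemiring (Matrix ι ι R) where
  carrier := {A | ∀ i j, 0 ≤ A i j}
  mul_mem' hA hB i j := Finset.sum_nonneg fun k _ => mul_nonneg (hA i k) (hB k j)
  one_mem' i j := by rw [one_apply]; split_ifs <;> simp
  add_mem' hA hB i j := add_nonneg (hA i j) (hB i j)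
  zero_mem' _ _ := le_rfl

variable {ι R}

theorem Matrix.trace_nonneg_of_mem_nonnegSubsemiring {A : Matrix ι ι R}
    (hA : A ∈ nonnegSubsemiring ι R) : 0 ≤ A.trace :=
  Finset.sum_nonneg fun i _ => hA i i

end Nonneg

section NonnegRing

variable {ι R : Type*} [Fintype ι] [DecidableEq ι] [Ring R] [PartialOrder R] [IsOrderedRing R]

theorem Matrix.add_pow_add_sub_pow_sub_mem_nonnegSubsemiring {M L : Matrix ι ι R}
    (hM : M ∈ nonnegSubsemiring ι R) (hL : L ∈ nonnegSubsemiring ι R) (k : ℕ) :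
    (M + L) ^ k + (M - L) ^ k - 2 • M ^ k ∈ nonnegSubsemiring ι R ∧
      (M + L) ^ k - (M - L) ^ k ∈ nonnegSubsemiring ι R := by
  induction k with
  | zero => simp only [pow_zero, two_nsmul, sub_self]; exact ⟨zero_mem _, zero_mem _⟩
  | succ k ih =>
    obtain ⟨hEven, hOdd⟩ := ih
    have hSum : (M + L) ^ k + (M - L) ^ k ∈ nonnegSubsemiring ι R := by
      simpa using add_mem hEven (nsmul_mem (pow_mem hM k) 2)
    constructor
    · convert add_mem (mul_mem hEven hM) (mul_mem hOdd hL) using 1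
      simp only [pow_succ]; noncomm_ring
    · convert add_mem (mul_mem hOdd hM) (mul_mem hSum hL) using 1
      simp only [pow_succ]; noncomm_ring

theorem Matrix.two_nsmul_trace_pow_le {M L : Matrix ι ι R}
    (hM : M ∈ nonnegSubsemiring ι R) (hL : L ∈ nonnegSubsemiring ι R) (k : ℕ) :
    2 • (M ^ k).trace ≤ ((M + L) ^ k + (M - L) ^ k).trace := by
  have h := trace_nonneg_of_mem_nonnegSubsemiring
    (add_pow_add_sub_pow_sub_mem_nonnegSubsemiring hM hL k).1
  rwa [trace_sub, trace_smul, sub_nonneg] at h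

end NonnegRing

theorem SimpleGraph.adjMatrix_mem_nonnegSubsemiring {V R : Type*} [Fintype V] [DecidableEq V]
    (G : SimpleGraph V) [DecidableRel G.Adj] [Semiring R] [PartialOrder R] [IsOrderedRing R] :
    G.adjMatrix R ∈ nonnegSubsemiring V R := fun i j => by
  rw [adjMatrix_apply]; split_ifs <;> simp

theorem SimpleGraph.Walk.trace_adjMatrix_pow_length_pos {V R : Type*} [Fintype V]
    [DecidableEq V] {G : SimpleGraph V} [DecidableRel G.Adj] [Semiring R] [PartialOrder R]
    [IsStrictOrderedRing R] {u : V} (w : G.Walk u u) :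
    0 < (G.adjMatrix R ^ w.length).trace := by
  have hu : 0 < (G.adjMatrix R ^ w.length) u u := by
    rw [adjMatrix_pow_apply_eq_card_walk]
    have : Nonempty {p : G.Walk u u | p.length = w.length} := ⟨⟨w, rfl⟩⟩
    exact_mod_cast Fintype.card_pos
  refine Finset.sum_pos' (fun i _ => ?_) ⟨u, mem_univ u, hu⟩
  rw [diag_apply, adjMatrix_pow_apply_eq_card_walk]
  exact Nat.cast_nonneg _

theorem loopMat_add_loopMat_compl (n : ℕ) (S : Finset (Fin n)) :
    loopMat n S + loopMat n Sᶜ = 1 := by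
  ext i j
  by_cases hij : i = j
  · subst hij; by_cases hi : i ∈ S <;> simp [loopMat, hi]
  · simp [loopMat, one_apply, hij]

theorem loopMat_mem_nonnegSubsemiring (n : ℕ) (S : Finset (Fin n)) :
    loopMat n S ∈ nonnegSubsemiring (Fin n) ℝ := fun i j => by
  simp only [loopMat, of_apply]; split_ifs <;> norm_num

theorem complement_loops_spectrum_implies_bipartite_general (n : ℕ) (G : SimpleGraph (Fin n))
    [DecidableRel G.Adj] (S : Finset (Fin n))
    (hA : (G.adjMatrix ℝ + loopMat n S).IsHermitian)
    (hB : (G.adjMatrix ℝ + loopMat n Sᶜ).IsHermitian)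
    (hspec : Finset.univ.val.map hB.eigenvalues =
      (Finset.univ.val.map hA.eigenvalues).map (fun x => 1 - x)) :
    G.Colorable 2 := by
  rw [SimpleGraph.two_colorable_iff_forall_loop_even]
  intro u w
  rw [← Nat.not_odd_iff_even]
  intro hOdd
  set k := w.length
  set M := G.adjMatrix ℝ
  set L := loopMat n Sᶜ
  have hOneSub : 1 - (M + loopMat n S) = -(M - L) := by
    rw [← loopMat_add_loopMat_compl n S]; abel
  have hTrace : ((M + L) ^ k + (M - L) ^ k).trace = 0 := by
    have h := hA.trace_pow_eq_trace_one_sub_pow hB hspec k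
    rwa [hOneSub, hOdd.neg_pow, trace_neg, eq_neg_iff_add_eq_zero, ← trace_add] at h
  have hLe : 2 • (M ^ k).trace ≤ ((M + L) ^ k + (M - L) ^ k).trace :=
    two_nsmul_trace_pow_le G.adjMatrix_mem_nonnegSubsemiring
      (loopMat_mem_nonnegSubsemiring n Sᶜ) k
  have hPos : 0 < (M ^ k).trace := w.trace_adjMatrix_pow_length_pos
  rw [hTrace, two_nsmul] at hLe
  linarith

/-- let `G` be connected of order `n` and `S ⊆ V(G)`.  If the multiset of
eigenvalues of `G_{V∖S}` is exactly `{1 − λ : λ eigenvalue of G_S}`, then `G` is bipartite. -/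
theorem complement_loops_spectrum_implies_bipartite (n : ℕ) (G : SimpleGraph (Fin n))
    [DecidableRel G.Adj] (hconn : G.Connected) (S : Finset (Fin n))
    (hA : (G.adjMatrix ℝ + loopMat n S).IsHermitian)
    (hB : (G.adjMatrix ℝ + loopMat n Sᶜ).IsHermitian)
    (hspec : Finset.univ.val.map hB.eigenvalues =
      (Finset.univ.val.map hA.eigenvalues).map (fun x => 1 - x)) :
    G.Colorable 2 :=
  complement_loops_spectrum_implies_bipartite_general n G S hA hB hspec
end

section
/- Let G be a bipartite graph of order n with vertex set V, and S ⊆ V. Then the self-loop energies satisfy 𝓔(G_S) = 𝓔(G_{V∖S}), where 𝓔(G_S) = Σᵢ |λᵢ(G_S) − σ/n| with σ = |S|. -/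
/-! A 2-colouring `c` of `G` gives the signing matrix `D = diag((-1)^(c v))`, with `D² = 1`,
`D A(G) D = -A(G)`, and `D M D = M` for every diagonal `M`. As `J_{V∖S} = 1 - J_S`
(here `J_S = loopMat n S`), this yields `A(G) + J_{V∖S} = D (1 - (A(G) + J_S)) D`, so the
eigenvalues of `G_{V∖S}` are the `1 - λᵢ(G_S)`; finally
`(1 - λᵢ) - (n - σ)/n = σ/n - λᵢ`. -/

open Matrix Finset

open Polynomial

theorem Matrix.charpoly_mul_mul_of_mul_self_eq_one {n R : Type*} [Fintype n] [DecidableEq n]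
    [CommRing R] {D : Matrix n n R} (hD : D * D = 1) (M : Matrix n n R) :
    (D * M * D).charpoly = M.charpoly := by
  rw [charpoly_mul_comm, ← mul_assoc, hD, one_mul]

namespace Matrix.IsHermitian

variable {n 𝕜 : Type*} [RCLike 𝕜] [Fintype n] [DecidableEq n] {A : Matrix n n 𝕜}

theorem sum_comp_eigenvalues_of_charpoly_eq {M : Type*} [AddCommMonoid M] (hA : A.IsHermitian)
    {f : n → ℝ} (h : A.charpoly = ∏ i, (X - C (f i : 𝕜))) (φ : ℝ → M) :
    ∑ i, φ (hA.eigenvalues i) = ∑ i, φ (f i) := by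
  have hroots : univ.val.map (RCLike.ofReal ∘ hA.eigenvalues) =
      univ.val.map (fun i => (f i : 𝕜)) := by
    rw [← hA.roots_charpoly_eq_eigenvalues, h, roots_prod _ _ (prod_ne_zero_iff.mpr
      fun i _ => X_sub_C_ne_zero _)]
    simp
  have := congrArg (fun s => ((s.map RCLike.re).map φ).sum) hroots
  simp only [Multiset.map_map, Function.comp_def, RCLike.ofReal_re] at this
  exact this

theorem charpoly_one_sub (hA : A.IsHermitian) :
    (1 - A).charpoly = ∏ i, (X - C ((1 - hA.eigenvalues i : ℝ) : 𝕜)) := by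
  rw [← hA.charpoly_cfc_eq (fun x => 1 - x), cfc_sub (fun _ => 1) (fun x => x), cfc_const_one ℝ A,
    cfc_id' ℝ A]

end Matrix.IsHermitian

namespace SimpleGraph.Coloring

variable {V : Type*} {G : SimpleGraph V} (c : G.Coloring (Fin 2)) (R : Type*) [CommRing R]

theorem neg_one_pow_mul_neg_one_pow_of_adj {u v : V} (h : G.Adj u v) :
    (-1 : R) ^ (c u : ℕ) * (-1) ^ (c v : ℕ) = -1 := by
  have := c.valid h
  rw [← pow_add, show (c u : ℕ) + c v = 1 by omega, pow_one]

variable [Fintype V] [DecidableEq V]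

def signMatrix : Matrix V V R :=
  diagonal fun v => (-1) ^ (c v : ℕ)

theorem signMatrix_mul_diagonal_mul_signMatrix (d : V → R) :
    c.signMatrix R * diagonal d * c.signMatrix R = diagonal d := by
  simp only [signMatrix, diagonal_mul_diagonal]
  congr! 2 with v
  rw [mul_right_comm, ← pow_add, ← two_mul, pow_mul, neg_one_sq, one_pow, one_mul]

theorem signMatrix_mul_self : c.signMatrix R * c.signMatrix R = 1 := by
  simpa only [mul_one, diagonal_one] using c.signMatrix_mul_diagonal_mul_signMatrix R fun _ => 1

theorem signMatrix_mul_adjMatrix_mul_signMatrix [DecidableRel G.Adj] :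
    c.signMatrix R * G.adjMatrix R * c.signMatrix R = -G.adjMatrix R := by
  ext u v
  simp only [signMatrix, diagonal_mul, mul_diagonal, adjMatrix_apply, Matrix.neg_apply]
  split_ifs with huv
  · rw [mul_one, c.neg_one_pow_mul_neg_one_pow_of_adj R huv]
  · simp

end SimpleGraph.Coloring

theorem loopMat_eq_diagonal (n : ℕ) (S : Finset (Fin n)) :
    loopMat n S = diagonal fun i => if i ∈ S then 1 else 0 := by
  ext i j
  by_cases hij : i = j
  · subst hij; simp [loopMat]
  · simp [loopMat, hij]

theorem loopMat_compl (n : ℕ) (S : Finset (Fin n)) : loopMat n Sᶜ = 1 - loopMat n S := by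
  rw [loopMat_eq_diagonal, loopMat_eq_diagonal, ← diagonal_one, diagonal_sub]
  congr! 2 with i
  by_cases hi : i ∈ S <;> simp [hi]

theorem adjMatrix_add_loopMat_compl {n : ℕ} {G : SimpleGraph (Fin n)} [DecidableRel G.Adj]
    (c : G.Coloring (Fin 2)) (S : Finset (Fin n)) :
    G.adjMatrix ℝ + loopMat n Sᶜ =
      c.signMatrix ℝ * (1 - (G.adjMatrix ℝ + loopMat n S)) * c.signMatrix ℝ := by
  rw [show 1 - (G.adjMatrix ℝ + loopMat n S) = loopMat n Sᶜ - G.adjMatrix ℝ by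
      rw [loopMat_compl]; abel,
    mul_sub, sub_mul, c.signMatrix_mul_adjMatrix_mul_signMatrix, loopMat_eq_diagonal,
    c.signMatrix_mul_diagonal_mul_signMatrix, sub_neg_eq_add, add_comm]

/-- for a bipartite graph `G` of order `n` and any `S ⊆ V(G)`, the self-loop
energies coincide: `𝓔(G_S) = 𝓔(G_{V∖S})`, where
`𝓔(G_S) = Σᵢ |λᵢ(G_S) − σ/n|` with `σ = |S|`. -/
theorem bipartite_selfLoop_energy_eq (n : ℕ) (G : SimpleGraph (Fin n))
    [DecidableRel G.Adj] (hbip : G.Colorable 2) (S : Finset (Fin n))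
    (hA : (G.adjMatrix ℝ + loopMat n S).IsHermitian)
    (hB : (G.adjMatrix ℝ + loopMat n Sᶜ).IsHermitian) :
    (∑ i, |hA.eigenvalues i - (S.card : ℝ) / n|) =
      ∑ i, |hB.eigenvalues i - (Sᶜ.card : ℝ) / n| := by
  obtain ⟨c⟩ := hbip
  have hcharpoly : (G.adjMatrix ℝ + loopMat n Sᶜ).charpoly =
      ∏ i, (X - C (1 - hA.eigenvalues i)) := by
    rw [adjMatrix_add_loopMat_compl c,
      charpoly_mul_mul_of_mul_self_eq_one (c.signMatrix_mul_self ℝ)]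
    exact hA.charpoly_one_sub
  rw [hB.sum_comp_eigenvalues_of_charpoly_eq (f := fun i => 1 - hA.eigenvalues i) hcharpoly
    fun x => |x - (Sᶜ.card : ℝ) / n|]
  refine sum_congr rfl fun i _ => ?_
  have hn : (n : ℝ) ≠ 0 := Nat.cast_ne_zero.mpr i.pos.ne'
  have hσ : (Sᶜ.card : ℝ) / n = 1 - S.card / n := by
    rw [card_compl, Fintype.card_fin,
      Nat.cast_sub (card_le_univ S |>.trans_eq (Fintype.card_fin n))]
    field_simp
  rw [hσ, show 1 - hA.eigenvalues i - (1 - S.card / n) = S.card / n - hA.eigenvalues i by ring,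
    abs_sub_comm]
end
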